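/- Let s ~ CN(0, λ) with λ > 0, let κ, λₚ, λ₀, P > 0, and set τ = √(κλ₀(1+κλₚ)), τ̃ = (1+κλₚ)√P, τ̂ = max{τ̃, (1+κλₚ)√P/2 + κλ₀/(2√P)}, and assume τ ≤ τ̃. Define x = √P·s/|s| if |s| ≥ τ̂, x = 0 if τ̃ ≤ |s| < τ̂, x = s/(1+κλₚ) if τ ≤ |s| < τ̃, and x = 0 if |s| < τ. Then E[|x|²] = Ξ/(1+κλₚ)² + P·e^{−τ̂²/λ}, where Ξ = (λ + τ²)·e^{−τ²/λ} − (λ + τ̃²)·e^{−τ̃²/λ}. -/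

import Mathlib

open MeasureTheory ProbabilityTheory

/-- The law of a circularly symmetric complex Gaussian `s = a + b·i` with variance `λ`,
modeled as the product of two real Gaussians `N(0, λ/2)` on the plane `ℝ × ℝ`. -/
noncomputable def complexGaussian (lam : ℝ) : Measure (ℝ × ℝ) :=
  (gaussianReal 0 (Real.toNNReal (lam / 2))).prod (gaussianReal 0 (Real.toNNReal (lam / 2)))

/-- The complex number corresponding to a point of the plane. -/
noncomputable def toC (p : ℝ × ℝ) : ℂ := (p.1 : ℂ) + (p.2 : ℂ) * Complex.I

/-!
Off the null set `s = 0`, `|x|²` is a function of `|s|` alone: `|s|²/(1+κλₚ)²` on `[τ, τ̃)`, `P` on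
`[τ̂, ∞)` and `0` elsewhere. Polar coordinates turn the Gaussian density `e^{-|s|²/λ}/(πλ)` into the
Rayleigh density `(2r/λ)e^{-r²/λ}` of `|s|`, and both pieces integrate in closed form because
`-e^{-r²/λ}` and `-(λ + r²)e^{-r²/λ}` are antiderivatives of `(2r/λ)e^{-r²/λ}` and of
`r²·(2r/λ)e^{-r²/λ}`.
-/

open Real Set

@[fun_prop]
lemma continuous_toC : Continuous toC := by
  unfold toC; fun_prop

lemma toC_eq_measurableEquivRealProd_symm (p : ℝ × ℝ) :
    toC p = Complex.measurableEquivRealProd.symm p := by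
  simp [toC, Complex.ext_iff]

lemma norm_toC_sq (p : ℝ × ℝ) : ‖toC p‖ ^ 2 = p.1 ^ 2 + p.2 ^ 2 := by
  rw [Complex.sq_norm, toC, Complex.normSq_add_mul_I]

lemma gaussianPDF_half_mul_gaussianPDF_half {lam : ℝ} (hlam : 0 < lam) (x y : ℝ) :
    gaussianPDF 0 (lam / 2).toNNReal x * gaussianPDF 0 (lam / 2).toNNReal y
      = ENNReal.ofReal ((π * lam)⁻¹ * exp (-(x ^ 2 + y ^ 2) / lam)) := by
  have hv : ((lam / 2).toNNReal : ℝ) = lam / 2 := Real.coe_toNNReal _ (by positivity)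
  rw [gaussianPDF, gaussianPDF, ← ENNReal.ofReal_mul (gaussianPDFReal_nonneg _ _ _),
    gaussianPDFReal, gaussianPDFReal, hv]
  congr 1
  have hs : (√(2 * π * (lam / 2)))⁻¹ * (√(2 * π * (lam / 2)))⁻¹ = (π * lam)⁻¹ := by
    rw [← mul_inv, Real.mul_self_sqrt (by positivity)]; ring_nf
  rw [show -(x ^ 2 + y ^ 2) / lam = -(x - 0) ^ 2 / (2 * (lam / 2)) + -(y - 0) ^ 2 / (2 * (lam / 2))
    by field_simp; ring, exp_add, ← hs]
  ring

lemma complexGaussian_eq_withDensity {lam : ℝ} (hlam : 0 < lam) :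
    complexGaussian lam = volume.withDensity
      fun p => ENNReal.ofReal ((π * lam)⁻¹ * exp (-‖toC p‖ ^ 2 / lam)) := by
  have hv : (lam / 2).toNNReal ≠ 0 := by simpa using hlam
  refine Measure.prod_eq fun s t hs ht => ?_
  simp_rw [norm_toC_sq, ← gaussianPDF_half_mul_gaussianPDF_half hlam]
  rw [withDensity_apply _ (hs.prod ht), gaussianReal_apply _ hv, gaussianReal_apply _ hv,
    Measure.volume_eq_prod, ← Measure.prod_restrict,
    lintegral_prod_mul (measurable_gaussianPDF _ _).aemeasurable
      (measurable_gaussianPDF _ _).aemeasurable]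

lemma integral_complexGaussian {lam : ℝ} (hlam : 0 < lam) (F : ℂ → ℝ) :
    ∫ p, F (toC p) ∂complexGaussian lam = ∫ z, (π * lam)⁻¹ * exp (-‖z‖ ^ 2 / lam) * F z := by
  rw [complexGaussian_eq_withDensity hlam, integral_withDensity_eq_integral_toReal_smul
    (by fun_prop) (by simp)]
  simp (disch := positivity) only [toC_eq_measurableEquivRealProd_symm, ENNReal.toReal_ofReal,
    smul_eq_mul]
  exact Complex.volume_preserving_equiv_real_prod.symm.integral_comp' fun z =>
    (π * lam)⁻¹ * exp (-‖z‖ ^ 2 / lam) * F z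

/-- The Rayleigh density, parametrised by its mean square `λ = 2σ²`. -/
noncomputable def rayleighPDFReal (lam r : ℝ) : ℝ := 2 * r / lam * exp (-r ^ 2 / lam)

lemma integral_comp_norm_toC_complexGaussian {lam : ℝ} (hlam : 0 < lam) (h : ℝ → ℝ) :
    ∫ p, h ‖toC p‖ ∂complexGaussian lam = ∫ r in Ioi 0, rayleighPDFReal lam r * h r := by
  rw [integral_complexGaussian hlam (fun z => h ‖z‖),
    integral_fun_norm_addHaar volume fun r => (π * lam)⁻¹ * exp (-r ^ 2 / lam) * h r,
    Complex.finrank_real_complex, measureReal_def, Complex.volume_ball]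
  simp only [ENNReal.ofReal_one, one_pow, one_mul, ENNReal.coe_toReal, NNReal.coe_real_pi,
    nsmul_eq_mul, smul_eq_mul, ← integral_const_mul]
  refine setIntegral_congr_fun measurableSet_Ioi fun r _ => ?_
  simp only [rayleighPDFReal]
  field_simp
  ring

instance {lam : ℝ} : IsProbabilityMeasure (complexGaussian lam) := by
  unfold complexGaussian; infer_instance

lemma ae_toC_ne_zero {lam : ℝ} (hlam : 0 < lam) : ∀ᵐ p ∂complexGaussian lam, toC p ≠ 0 := by
  rw [complexGaussian_eq_withDensity hlam]
  filter_upwards [withDensity_absolutelyContinuous _ _ |>.ae_le (Measure.ae_ne volume 0)] with p hp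
  contrapose! hp
  simpa [toC, Complex.ext_iff, Prod.ext_iff] using hp

lemma hasDerivAt_neg_sq_div (lam r : ℝ) :
    HasDerivAt (fun r => -r ^ 2 / lam) (-(2 * r) / lam) r := by
  simpa using (hasDerivAt_pow 2 r).neg.div_const lam

lemma hasDerivAt_neg_exp_neg_sq_div (lam r : ℝ) :
    HasDerivAt (fun r => -exp (-r ^ 2 / lam)) (rayleighPDFReal lam r) r := by
  refine (hasDerivAt_neg_sq_div lam r).exp.neg.congr_deriv ?_
  simp only [rayleighPDFReal]
  ring

lemma hasDerivAt_neg_add_sq_mul_exp_neg_sq_div {lam : ℝ} (hlam : lam ≠ 0) (r : ℝ) :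
    HasDerivAt (fun r => -(lam + r ^ 2) * exp (-r ^ 2 / lam)) (rayleighPDFReal lam r * r ^ 2) r := by
  refine ((((hasDerivAt_pow 2 r).const_add lam).neg).mul
    (hasDerivAt_neg_sq_div lam r).exp).congr_deriv ?_
  simp only [rayleighPDFReal, Pi.neg_apply, Nat.cast_ofNat, pow_one, Nat.add_one_sub_one]
  field_simp
  ring

lemma integral_Ioi_rayleighPDFReal {lam : ℝ} (hlam : 0 < lam) (c : ℝ) :
    ∫ r in Ioi c, rayleighPDFReal lam r = exp (-c ^ 2 / lam) := by
  have hint : IntegrableOn (rayleighPDFReal lam) (Ioi c) := by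
    have := (integrable_mul_exp_neg_mul_sq (inv_pos.mpr hlam)).const_mul (2 / lam)
    refine (this.congr (ae_of_all _ fun r => ?_)).integrableOn
    simp only [rayleighPDFReal]
    ring_nf
  have hlim : Filter.Tendsto (fun r => -exp (-r ^ 2 / lam)) Filter.atTop (nhds (-0)) :=
    (tendsto_exp_atBot.comp <| Filter.tendsto_neg_atTop_atBot.comp <|
      (Filter.tendsto_pow_atTop two_ne_zero).atTop_div_const hlam).neg.congr fun r => by
        simp [neg_div]
  rw [integral_Ioi_of_hasDerivAt_of_tendsto (by fun_prop)
    (fun r _ => hasDerivAt_neg_exp_neg_sq_div lam r) hint hlim]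
  ring

lemma integral_rayleighPDFReal_mul_sq {lam : ℝ} (hlam : lam ≠ 0) (a b : ℝ) :
    ∫ r in a..b, rayleighPDFReal lam r * r ^ 2
      = (lam + a ^ 2) * exp (-a ^ 2 / lam) - (lam + b ^ 2) * exp (-b ^ 2 / lam) := by
  rw [intervalIntegral.integral_eq_sub_of_hasDerivAt
    (fun r _ => hasDerivAt_neg_add_sq_mul_exp_neg_sq_div hlam r)
    (Continuous.intervalIntegrable (by unfold rayleighPDFReal; fun_prop) _ _)]
  ring

lemma integral_indicator_Ici_norm_toC_complexGaussian {lam c : ℝ} (hlam : 0 < lam) (hc : 0 ≤ c) :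
    ∫ p, (Ici c).indicator 1 ‖toC p‖ ∂complexGaussian lam = exp (-c ^ 2 / lam) := by
  simp_rw [integral_comp_norm_toC_complexGaussian hlam, ← indicator_mul_right, Pi.one_apply,
    mul_one, ← integral_Ici_eq_integral_Ioi, setIntegral_indicator measurableSet_Ici,
    Ici_inter_Ici, max_eq_right hc, integral_Ici_eq_integral_Ioi]
  exact integral_Ioi_rayleighPDFReal hlam c

lemma integral_indicator_Ico_sq_norm_toC_complexGaussian {lam a b : ℝ} (hlam : 0 < lam)
    (ha : 0 ≤ a) (hab : a ≤ b) :
    ∫ p, (Ico a b).indicator (· ^ 2) ‖toC p‖ ∂complexGaussian lam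
      = (lam + a ^ 2) * exp (-a ^ 2 / lam) - (lam + b ^ 2) * exp (-b ^ 2 / lam) := by
  rw [integral_comp_norm_toC_complexGaussian hlam, ← integral_Ici_eq_integral_Ioi]
  simp_rw [← indicator_mul_right]
  rw [setIntegral_indicator measurableSet_Ico,
    inter_eq_right.mpr (Ico_subset_Ici_self.trans (Ici_subset_Ici.mpr ha)),
    integral_Ico_eq_integral_Ioo, ← integral_Ioc_eq_integral_Ioo,
    ← intervalIntegral.integral_of_le hab, integral_rayleighPDFReal_mul_sq hlam.ne']

lemma integrable_comp_norm_toC_complexGaussian {lam C : ℝ} {h : ℝ → ℝ} (hh : Measurable h)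
    (hC : ∀ r, |h r| ≤ C) : Integrable (fun p => h ‖toC p‖) (complexGaussian lam) :=
  .of_bound (hh.comp (by fun_prop)).aestronglyMeasurable C (ae_of_all _ fun _ => hC _)

lemma integrable_indicator_Ico_sq_norm_toC_complexGaussian {lam a b : ℝ} (ha : 0 ≤ a) :
    Integrable (fun p => (Ico a b).indicator (· ^ 2) ‖toC p‖) (complexGaussian lam) := by
  refine integrable_comp_norm_toC_complexGaussian (C := b ^ 2)
    ((measurable_id.pow_const 2).indicator measurableSet_Ico) fun r => ?_
  by_cases hr : r ∈ Ico a b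
  · rw [indicator_of_mem hr, abs_sq]
    exact pow_le_pow_left₀ (ha.trans hr.1) hr.2.le 2
  · rw [indicator_of_notMem hr, abs_zero]
    positivity

lemma integrable_indicator_Ici_norm_toC_complexGaussian {lam c : ℝ} :
    Integrable (fun p => (Ici c).indicator (1 : ℝ → ℝ) ‖toC p‖) (complexGaussian lam) :=
  integrable_comp_norm_toC_complexGaussian (C := 1) (measurable_one.indicator measurableSet_Ici)
    fun r => by by_cases hr : r ∈ Ici c <;> simp [hr]

/-- With `a = 1 + κλₚ` and `(t₁, t₂, t₃) = (τ, τ̃, τ̂)` this is the precoder output `x` as a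
function of `s`. -/
noncomputable def twoStepHardThreshold (P a t₁ t₂ t₃ : ℝ) (s : ℂ) : ℂ :=
  if t₃ ≤ ‖s‖ then (Real.sqrt P : ℂ) * s / ((‖s‖ : ℝ) : ℂ)
  else if t₂ ≤ ‖s‖ then 0
  else if t₁ ≤ ‖s‖ then s / (a : ℂ)
  else 0

lemma norm_twoStepHardThreshold_sq {P a t₁ t₂ t₃ : ℝ} (hP : 0 ≤ P) (h₂₃ : t₂ ≤ t₃) {s : ℂ}
    (hs : s ≠ 0) :
    ‖twoStepHardThreshold P a t₁ t₂ t₃ s‖ ^ 2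
      = (Ico t₁ t₂).indicator (· ^ 2) ‖s‖ / a ^ 2 + P * (Ici t₃).indicator 1 ‖s‖ := by
  unfold twoStepHardThreshold
  split_ifs with h₃ h₂ h₁
  · have : ‖s‖ ∉ Ico t₁ t₂ := fun h => h.2.not_ge (h₂₃.trans h₃)
    simp [this, h₃, hs, sq_sqrt hP]
  · simp [h₂, not_le.mp h₃]
  · simp [h₁, not_le.mp h₂, not_le.mp h₃, div_pow]
  · simp [not_le.mp h₁, not_le.mp h₃]

theorem expectation_sq_two_step_general (lam κ lamp lam0 P τ τt τh : ℝ)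
    (hlam : 0 < lam) (hP : 0 < P)
    (hτ : τ = Real.sqrt (κ * lam0 * (1 + κ * lamp)))
    (hτh : τh = max τt
      ((1 + κ * lamp) / 2 * Real.sqrt P + κ * lam0 / (2 * Real.sqrt P)))
    (hττt : τ ≤ τt) :
    let x : ℝ × ℝ → ℂ := fun p =>
      if τh ≤ ‖toC p‖ then
        (Real.sqrt P : ℂ) * toC p / ((‖toC p‖ : ℝ) : ℂ)
      else if τt ≤ ‖toC p‖ then 0
      else if τ ≤ ‖toC p‖ then toC p / ((1 + κ * lamp : ℝ) : ℂ)
      else 0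
    let Ξ : ℝ := (lam + τ ^ 2) * Real.exp (-(τ ^ 2) / lam)
      - (lam + τt ^ 2) * Real.exp (-(τt ^ 2) / lam)
    (∫ p : ℝ × ℝ, ‖x p‖ ^ 2 ∂(complexGaussian lam))
      = Ξ / (1 + κ * lamp) ^ 2 + P * Real.exp (-(τh ^ 2) / lam) := by
  intro x Ξ
  have hτ0 : 0 ≤ τ := hτ ▸ sqrt_nonneg _
  have hτtτh : τt ≤ τh := hτh ▸ le_max_left _ _
  have hx : ∀ᵐ p ∂complexGaussian lam, ‖x p‖ ^ 2 =
      (Ico τ τt).indicator (· ^ 2) ‖toC p‖ / (1 + κ * lamp) ^ 2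
        + P * (Ici τh).indicator 1 ‖toC p‖ :=
    (ae_toC_ne_zero hlam).mono fun p hp => norm_twoStepHardThreshold_sq hP.le hτtτh hp
  rw [integral_congr_ae hx,
    integral_add ((integrable_indicator_Ico_sq_norm_toC_complexGaussian hτ0).div_const _)
      (integrable_indicator_Ici_norm_toC_complexGaussian.const_mul P),
    integral_div, integral_const_mul,
    integral_indicator_Ico_sq_norm_toC_complexGaussian hlam hτ0 hττt,
    integral_indicator_Ici_norm_toC_complexGaussian hlam (hτ0.trans (hττt.trans hτtτh))]

/-- For `s ~ CN(0, λ)`, `κ, λₚ, λ₀, P > 0`, thresholds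
`τ = √(κλ₀(1+κλₚ))`, `τ̃ = (1+κλₚ)√P`, `τ̂ = max{τ̃, (1+κλₚ)√P/2 + κλ₀/(2√P)}`
with `τ ≤ τ̃`, the two-step hard-thresholded variable `x` satisfies
`E[|x|²] = Ξ/(1+κλₚ)² + P·e^{−τ̂²/λ}` where
`Ξ = (λ + τ²)·e^{−τ²/λ} − (λ + τ̃²)·e^{−τ̃²/λ}`. -/
theorem expectation_sq_two_step (lam κ lamp lam0 P τ τt τh : ℝ)
    (hlam : 0 < lam) (hκ : 0 < κ) (hlamp : 0 < lamp) (hlam0 : 0 < lam0) (hP : 0 < P)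
    (hτ : τ = Real.sqrt (κ * lam0 * (1 + κ * lamp)))
    (hτt : τt = (1 + κ * lamp) * Real.sqrt P)
    (hτh : τh = max τt
      ((1 + κ * lamp) / 2 * Real.sqrt P + κ * lam0 / (2 * Real.sqrt P)))
    (hττt : τ ≤ τt) :
    let x : ℝ × ℝ → ℂ := fun p =>
      if τh ≤ ‖toC p‖ then
        (Real.sqrt P : ℂ) * toC p / ((‖toC p‖ : ℝ) : ℂ)
      else if τt ≤ ‖toC p‖ then 0
      else if τ ≤ ‖toC p‖ then toC p / ((1 + κ * lamp : ℝ) : ℂ)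
      else 0
    let Ξ : ℝ := (lam + τ ^ 2) * Real.exp (-(τ ^ 2) / lam)
      - (lam + τt ^ 2) * Real.exp (-(τt ^ 2) / lam)
    (∫ p : ℝ × ℝ, ‖x p‖ ^ 2 ∂(complexGaussian lam))
      = Ξ / (1 + κ * lamp) ^ 2 + P * Real.exp (-(τh ^ 2) / lam) :=
  expectation_sq_two_step_general lam κ lamp lam0 P τ τt τh hlam hP hτ hτh hττt
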